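/- Let (G_j) be a sequence of finite connected BFS-labeled edge-transitive graphs of maximum degree at most d that converges pointwise to a graph Ḡ (i.e., the vertex sets and edge sets converge pointwise as subsets of ℕ and of pairs of naturals). Then Ḡ is connected and edge-transitive. -/

import Mathlib

open SimpleGraph

/-- A graph is edge-transitive if any edge can be mapped to any other edge
(as unordered pairs) by an automorphism. -/
def EdgeTransitive {V : Type*} (G : SimpleGraph V) : Prop :=
  ∀ ⦃a b c d : V⦄, G.Adj a b → G.Adj c d →
    ∃ σ : G ≃g G, (σ a = c ∧ σ b = d) ∨ (σ a = d ∧ σ b = c)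

/-
In a connected BFS-labelled graph of maximum degree at most `d`, a vertex at distance `r` from `1`
has label at most `(d + 1) ^ r`, and every label `v` exceeds `dist 1 v`. So a shortest path from `1`
to `v` only uses labels at most `(d + 1) ^ v`, a bound independent of the graph: once the finitely
many edges among these labels have stabilised, the path survives in the limit. Likewise, an
automorphism sending a fixed edge `ab` to `ce` sends each vertex `w` to a label bounded in terms of
`a, b, c, e, w` alone. Made to fix the isolated vertices, these automorphisms and their inverses
converge pointwise along an ultrafilter finer than `atTop`, and the limit is an automorphism of
`Ḡ` sending `ab` to `ce`.
-/

open Filter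

namespace SimpleGraph

variable {V : Type*} {G : SimpleGraph V}

lemma Reachable.exists_adj_dist_add_one {u v : V} (h : G.Reachable u v) (hne : u ≠ v) :
    ∃ w, G.Reachable u w ∧ G.Adj w v ∧ G.dist u w + 1 = G.dist u v := by
  obtain ⟨p, hp⟩ := h.exists_walk_length_eq_dist
  have hnil : ¬p.Nil := Walk.not_nil_of_ne hne
  have hadj := p.adj_penultimate hnil
  refine ⟨p.penultimate, p.dropLast.reachable, hadj, le_antisymm ?_ ?_⟩
  · have := G.dist_le p.dropLast
    have := Walk.length_dropLast_add_one hnil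
    omega
  · have := p.dropLast.reachable.dist_triangle_left v
    rwa [dist_eq_one_iff_adj.2 hadj] at this

lemma Reachable.dist_map_le {W : Type*} {G' : SimpleGraph W} (f : G →g G') {u v : V}
    (h : G.Reachable u v) : G'.dist (f u) (f v) ≤ G.dist u v := by
  obtain ⟨p, hp⟩ := h.exists_walk_length_eq_dist
  simpa [hp] using G'.dist_le (p.map f)

lemma Iso.apply_mem_support_iff {W : Type*} {G' : SimpleGraph W} (σ : G ≃g G') {x : V} :
    σ x ∈ G'.support ↔ x ∈ G.support := by
  simp only [mem_support]
  refine ⟨fun ⟨w, hw⟩ => ⟨σ.symm w, ?_⟩, fun ⟨w, hw⟩ => ⟨σ w, σ.map_adj_iff.2 hw⟩⟩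
  rwa [← σ.map_adj_iff, RelIso.apply_symm_apply]

lemma Iso.exists_eqOn_support (σ : G ≃g G) :
    ∃ τ : G ≃g G, Set.EqOn τ σ G.support ∧ ∀ x ∉ G.support, τ x = x := by
  classical
  let τ : Equiv.Perm V :=
    Equiv.Perm.ofSubtype (Equiv.Perm.subtypePerm σ.toEquiv fun _ => σ.apply_mem_support_iff)
  have hin : Set.EqOn τ σ G.support := fun x hx => Equiv.Perm.ofSubtype_apply_of_mem _ hx
  have hout : ∀ x ∉ G.support, τ x = x := fun x hx =>
    Equiv.Perm.ofSubtype_apply_of_not_mem _ hx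
  refine ⟨⟨τ, fun {x y} => ?_⟩, hin, hout⟩
  change G.Adj (τ x) (τ y) ↔ G.Adj x y
  by_cases hx : x ∈ G.support
  · by_cases hy : y ∈ G.support
    · rw [hin hx, hin hy, σ.map_adj_iff]
    · rw [hout y hy]
      exact iff_of_false (hy ·.right_mem_support) (hy ·.right_mem_support)
  · rw [hout x hx]
    exact iff_of_false (hx ·.left_mem_support) (hx ·.left_mem_support)

lemma card_le_pow_of_dist_le {d : ℕ} (hfin : ∀ v, (G.neighborSet v).Finite)
    (hdeg : ∀ v, (G.neighborSet v).ncard ≤ d) (u : V) (r : ℕ) (s : Finset V)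
    (hs : ∀ v ∈ s, G.Reachable u v ∧ G.dist u v ≤ r) : s.card ≤ (d + 1) ^ r := by
  classical
  induction r generalizing s with
  | zero =>
    have : s ⊆ {u} := fun v hv => by
      obtain ⟨hr, h0⟩ := hs v hv
      simp [(hr.dist_eq_zero_iff.mp (Nat.le_zero.mp h0)).symm]
    simpa using Finset.card_le_card this
  | succ r ih =>
    have hpred : ∀ v ∈ s, ∃ w, (G.Reachable u w ∧ G.dist u w ≤ r) ∧
        v ∈ insert w (hfin w).toFinset := by
      intro v hv
      obtain ⟨hr, hd⟩ := hs v hv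
      by_cases huv : u = v
      · exact ⟨u, ⟨Reachable.refl u, by simp⟩, by simp [huv]⟩
      · obtain ⟨w, hw, hadj, hdw⟩ := hr.exists_adj_dist_add_one huv
        exact ⟨w, ⟨hw, by omega⟩, by simp [hadj]⟩
    choose! p hp hmem using hpred
    have hcover : s ⊆ (s.image p).biUnion fun w => insert w (hfin w).toFinset :=
      fun v hv => Finset.mem_biUnion.2 ⟨p v, Finset.mem_image_of_mem p hv, hmem v hv⟩
    calc s.card ≤ (s.image p).card * (d + 1) :=
          (Finset.card_le_card hcover).trans <| Finset.card_biUnion_le_card_mul _ _ _ fun w _ =>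
            (Finset.card_insert_le _ _).trans <| Nat.succ_le_succ <|
              (Set.ncard_eq_toFinset_card _ (hfin w)) ▸ hdeg w
      _ ≤ (d + 1) ^ r * (d + 1) :=
          Nat.mul_le_mul_right _ <| ih _ <| by simpa using fun v hv => hp v hv
      _ = (d + 1) ^ (r + 1) := (pow_succ _ _).symm

lemma exists_iso_of_eventually_eq {ι : Type*} {l : Filter ι} [l.NeBot]
    {G : ι → SimpleGraph V} {H : SimpleGraph V} (hE : ∀ a b, ∀ᶠ j in l, ((G j).Adj a b ↔ H.Adj a b))
    (σ : ∀ j, G j ≃g G j) {F F' : V → V} (hF : ∀ v, ∀ᶠ j in l, σ j v = F v)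
    (hF' : ∀ v, ∀ᶠ j in l, (σ j).symm v = F' v) : ∃ τ : H ≃g H, ⇑τ = F := by
  have hl : Function.LeftInverse F' F := fun v => by
    obtain ⟨j, h1, h2⟩ := ((hF v).and (hF' (F v))).exists
    rw [← h2, ← h1, RelIso.symm_apply_apply]
  have hr : Function.RightInverse F' F := fun v => by
    obtain ⟨j, h1, h2⟩ := ((hF' v).and (hF (F' v))).exists
    rw [← h2, ← h1, RelIso.apply_symm_apply]
  refine ⟨⟨⟨F, F', hl, hr⟩, fun {x y} => ?_⟩, rfl⟩
  obtain ⟨j, hx, hy, hxy, hFxy⟩ :=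
    ((hF x).and ((hF y).and ((hE x y).and (hE (F x) (F y))))).exists
  change H.Adj (F x) (F y) ↔ H.Adj x y
  rw [← hFxy, ← hx, ← hy, (σ j).map_adj_iff, hxy]

end SimpleGraph

lemma Ultrafilter.exists_eventually_eq_of_eventually_le {ι : Type*} (U : Ultrafilter ι)
    {f : ι → ℕ} {B : ℕ} (h : ∀ᶠ j in U, f j ≤ B) : ∃ c, ∀ᶠ j in U, f j = c := by
  obtain ⟨c, -, hc⟩ := (U.eventually_exists_mem_iff (P := fun c j => f j = c)
    (Set.finite_Iic B)).1 (h.mono fun j hj => ⟨f j, hj, rfl⟩)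
  exact ⟨c, hc⟩

structure IsBFSLabeled (G : SimpleGraph ℕ) (n : ℕ) : Prop where
  adj_mem : ∀ a b, G.Adj a b → a ∈ Set.Icc 1 n ∧ b ∈ Set.Icc 1 n
  connected : (G.induce (Set.Icc 1 n)).Connected
  dist_mono : ∀ i k, i ∈ Set.Icc 1 n → k ∈ Set.Icc 1 n → i < k → G.dist 1 i ≤ G.dist 1 k

namespace IsBFSLabeled

variable {G : SimpleGraph ℕ} {n d : ℕ}

lemma one_mem (hG : IsBFSLabeled G n) : 1 ∈ Set.Icc 1 n := by
  obtain ⟨⟨x, hx⟩⟩ := hG.connected.nonempty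
  exact ⟨le_rfl, hx.1.trans hx.2⟩

lemma support_subset (hG : IsBFSLabeled G n) : G.support ⊆ Set.Icc 1 n :=
  fun _ ⟨w, hw⟩ => (hG.adj_mem _ w hw).1

lemma reachable_one (hG : IsBFSLabeled G n) {v : ℕ} (hv : v ∈ Set.Icc 1 n) : G.Reachable 1 v :=
  (hG.connected.preconnected ⟨1, hG.one_mem⟩ ⟨v, hv⟩).map (Embedding.induce _).toHom

lemma mem_of_reachable_one (hG : IsBFSLabeled G n) {v : ℕ} (h : G.Reachable 1 v) :
    v ∈ Set.Icc 1 n := by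
  by_cases h1 : 1 = v
  · exact h1 ▸ hG.one_mem
  · obtain ⟨w, -, hadj, -⟩ := h.exists_adj_dist_add_one h1
    exact hG.support_subset hadj.right_mem_support

lemma lt_of_dist_lt (hG : IsBFSLabeled G n) {i k : ℕ} (hi : i ∈ Set.Icc 1 n)
    (hk : k ∈ Set.Icc 1 n) (h : G.dist 1 i < G.dist 1 k) : i < k := by
  by_contra! hki
  rcases hki.lt_or_eq with hlt | rfl
  · exact (hG.dist_mono k i hk hi hlt).not_gt h
  · exact h.false

/-- Along a shortest path from `1`, labels increase strictly while distances increase by one. -/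
lemma dist_lt (hG : IsBFSLabeled G n) {v : ℕ} (hv : v ∈ Set.Icc 1 n) : G.dist 1 v < v := by
  induction hD : G.dist 1 v generalizing v with
  | zero => exact hv.1
  | succ D ih =>
    have h1v : 1 ≠ v := by rintro rfl; simp at hD
    obtain ⟨w, -, hadj, hdw⟩ := (hG.reachable_one hv).exists_adj_dist_add_one h1v
    have hw := (hG.adj_mem w v hadj).1
    have := ih hw (by omega)
    have := hG.lt_of_dist_lt hw hv (by omega)
    omega

lemma le_pow_dist (hG : IsBFSLabeled G n) (hdeg : ∀ v, (G.neighborSet v).ncard ≤ d) {v : ℕ}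
    (hv : v ∈ Set.Icc 1 n) : v ≤ (d + 1) ^ G.dist 1 v := by
  have hfin : ∀ x, (G.neighborSet x).Finite := fun x =>
    (Set.finite_Icc 1 n).subset fun y hy => (hG.adj_mem x y hy).2
  have := card_le_pow_of_dist_le hfin hdeg 1 (G.dist 1 v) (Finset.Icc 1 v) fun i hi => by
    rw [Finset.mem_Icc] at hi
    have hi' : i ∈ Set.Icc 1 n := ⟨hi.1, hi.2.trans hv.2⟩
    refine ⟨hG.reachable_one hi', ?_⟩
    rcases hi.2.lt_or_eq with hlt | rfl
    · exact hG.dist_mono i v hi' hv hlt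
    · exact le_rfl
  simpa using this

lemma exists_walk_support_le (hG : IsBFSLabeled G n)
    (hdeg : ∀ v, (G.neighborSet v).ncard ≤ d) {v : ℕ} (hv : v ∈ Set.Icc 1 n) :
    ∃ p : G.Walk 1 v, ∀ x ∈ p.support, x ∈ Set.Icc 1 n ∧ x ≤ (d + 1) ^ v := by
  obtain ⟨p, hp⟩ := (hG.reachable_one hv).exists_walk_length_eq_dist
  refine ⟨p, fun x hx => ?_⟩
  have hx' := hG.mem_of_reachable_one (p.takeUntil x hx).reachable
  have hdist : G.dist 1 x ≤ v :=
    calc G.dist 1 x ≤ (p.takeUntil x hx).length := G.dist_le _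
      _ ≤ p.length := p.length_takeUntil_le_length hx
      _ ≤ v := hp ▸ (hG.dist_lt hv).le
  exact ⟨hx', (hG.le_pow_dist hdeg hx').trans (Nat.pow_le_pow_right d.succ_pos hdist)⟩

lemma apply_le_max_pow (hG : IsBFSLabeled G n) (hdeg : ∀ v, (G.neighborSet v).ncard ≤ d)
    (φ : G ≃g G) (hφ : ∀ x ∉ G.support, φ x = x) {p k : ℕ} (hp : p ∈ G.support) (hpk : φ p + p ≤ k)
    (w : ℕ) : φ w ≤ max w ((d + 1) ^ (k + w)) := by
  by_cases hw : w ∈ G.support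
  · have hp' := hG.support_subset hp
    have hw' := hG.support_subset hw
    have hφp := hG.support_subset (φ.apply_mem_support_iff.2 hp)
    have hφw := hG.support_subset (φ.apply_mem_support_iff.2 hw)
    have h1 := (hG.reachable_one hφp).dist_triangle_left (φ w)
    have h2 := ((hG.reachable_one hp').symm.trans (hG.reachable_one hw')).dist_map_le φ.toHom
    have h3 := (hG.reachable_one hp').symm.dist_triangle_left w
    have h4 : G.dist p 1 = G.dist 1 p := G.dist_comm
    have := hG.dist_lt hp'
    have := hG.dist_lt hw'
    have := hG.dist_lt hφp
    refine le_max_of_le_right <| (hG.le_pow_dist hdeg hφw).trans <|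
      Nat.pow_le_pow_right d.succ_pos ?_
    simp only [RelEmbedding.coe_toRelHom, RelIso.coe_toRelEmbedding] at h2
    omega
  · exact (hφ w hw).le.trans (le_max_left _ _)

end IsBFSLabeled

section Limit

variable {ι : Type*} {l : Filter ι} [l.NeBot] {d : ℕ} {n : ι → ℕ} {G : ι → SimpleGraph ℕ}
  {Gbar : SimpleGraph ℕ}

theorem connected_induce_of_pointwise_limit {Vbar : Set ℕ}
    (hG : ∀ j, IsBFSLabeled (G j) (n j)) (hdeg : ∀ j v, ((G j).neighborSet v).ncard ≤ d)
    (hV : ∀ a, ∀ᶠ j in l, (a ∈ Set.Icc 1 (n j) ↔ a ∈ Vbar))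
    (hE : ∀ a b, ∀ᶠ j in l, ((G j).Adj a b ↔ Gbar.Adj a b)) :
    (Gbar.induce Vbar).Connected := by
  obtain ⟨j₁, hj₁⟩ := (hV 1).exists
  have h1 : 1 ∈ Vbar := hj₁.1 (hG j₁).one_mem
  refine (connected_iff_exists_forall_reachable _).2 ⟨⟨1, h1⟩, ?_⟩
  rintro ⟨v, hv⟩
  obtain ⟨j, hvj, hj⟩ := ((hV v).and <| (Finset.Iic ((d + 1) ^ v)).eventually_all.2 fun x _ =>
    (hV x).and <| (Finset.Iic ((d + 1) ^ v)).eventually_all.2 fun y _ => hE x y).exists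
  obtain ⟨p, hp⟩ := (hG j).exists_walk_support_le (hdeg j) (hvj.2 hv)
  have hpM : ∀ x ∈ p.support, x ∈ Finset.Iic ((d + 1) ^ v) := fun x hx =>
    Finset.mem_Iic.2 (hp x hx).2
  have hedges : ∀ e ∈ p.edges, e ∈ Gbar.edgeSet := by
    rintro ⟨x, y⟩ he
    exact ((hj x (hpM x (p.fst_mem_support_of_mem_edges he))).2 y
      (hpM y (p.snd_mem_support_of_mem_edges he))).1 (p.adj_of_mem_edges he)
  have hVbar : ∀ x ∈ (p.transfer Gbar hedges).support, x ∈ Vbar := by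
    rw [Walk.support_transfer]
    exact fun x hx => ((hj x (hpM x hx)).1).1 (hp x hx).1
  exact ((p.transfer Gbar hedges).induce Vbar hVbar).reachable

theorem edgeTransitive_of_pointwise_limit (hG : ∀ j, IsBFSLabeled (G j) (n j))
    (hdeg : ∀ j v, ((G j).neighborSet v).ncard ≤ d) (het : ∀ j, EdgeTransitive (G j))
    (hE : ∀ a b, ∀ᶠ j in l, ((G j).Adj a b ↔ Gbar.Adj a b)) : EdgeTransitive Gbar := by
  intro a b c e hab hce
  set U := Ultrafilter.of l
  have hU {P : ι → Prop} (h : ∀ᶠ j in l, P j) : ∀ᶠ j in U, P j := Ultrafilter.of_le l h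
  have hedges : ∀ᶠ j in l, (G j).Adj a b ∧ (G j).Adj c e :=
    ((hE a b).and (hE c e)).mono fun j h => ⟨h.1.2 hab, h.2.2 hce⟩
  have hτ : ∀ j, ∃ τ : G j ≃g G j, ((G j).Adj a b ∧ (G j).Adj c e →
      (τ a = c ∧ τ b = e) ∨ (τ a = e ∧ τ b = c)) ∧ ∀ x ∉ (G j).support, τ x = x := by
    intro j
    by_cases h : (G j).Adj a b ∧ (G j).Adj c e
    · obtain ⟨σ, hσ⟩ := het j h.1 h.2
      obtain ⟨τ, hτσ, hτ⟩ := σ.exists_eqOn_support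
      refine ⟨τ, fun _ => ?_, hτ⟩
      rwa [hτσ h.1.left_mem_support, hτσ h.1.right_mem_support]
    · exact ⟨RelIso.refl _, fun h' => absurd h' h, fun _ _ => rfl⟩
  choose τ hτ hfix using hτ
  have hbound (w : ℕ) : ∀ᶠ j in l, τ j w ≤ max w ((d + 1) ^ (a + b + c + e + w)) ∧
      (τ j).symm w ≤ max w ((d + 1) ^ (a + b + c + e + w)) := by
    filter_upwards [hedges] with j hj
    have hfix' : ∀ x ∉ (G j).support, (τ j).symm x = x := fun x hx =>
      (τ j).symm_apply_eq.2 (hfix j x hx).symm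
    refine ⟨(hG j).apply_le_max_pow (hdeg j) (τ j) (hfix j) hj.1.left_mem_support ?_ w,
      (hG j).apply_le_max_pow (hdeg j) (τ j).symm hfix' hj.2.left_mem_support ?_ w⟩
    · rcases hτ j hj with ⟨h, -⟩ | ⟨h, -⟩ <;> omega
    · rcases hτ j hj with ⟨h, -⟩ | ⟨-, h⟩ <;> rw [(τ j).symm_apply_eq.2 h.symm] <;> omega
  choose F hF using fun w =>
    U.exists_eventually_eq_of_eventually_le (hU ((hbound w).mono fun _ h => h.1))
  choose F' hF' using fun w =>
    U.exists_eventually_eq_of_eventually_le (hU ((hbound w).mono fun _ h => h.2))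
  obtain ⟨σ, rfl⟩ := exists_iso_of_eventually_eq (fun x y => hU (hE x y)) τ hF hF'
  obtain ⟨j, hja, hjb, hj⟩ := ((hF a).and ((hF b).and (hU hedges))).exists
  exact ⟨σ, hja ▸ hjb ▸ hτ j hj⟩

end Limit

theorem stmt_17_general (d : ℕ) (n : ℕ → ℕ) (G : ℕ → SimpleGraph ℕ)
    (Gbar : SimpleGraph ℕ) (Vbar : Set ℕ)
    -- each G j has vertex set {1,…,n j}
    (hsupp : ∀ j, ∀ a b : ℕ, (G j).Adj a b → a ∈ Set.Icc 1 (n j) ∧ b ∈ Set.Icc 1 (n j))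
    -- connected
    (hconn : ∀ j, ((G j).induce (Set.Icc 1 (n j))).Connected)
    -- BFS-labeled
    (hbfs : ∀ j, ∀ i k : ℕ, i ∈ Set.Icc 1 (n j) → k ∈ Set.Icc 1 (n j) → i < k →
      (G j).dist 1 i ≤ (G j).dist 1 k)
    -- maximum degree at most d
    (hdeg : ∀ j, ∀ v : ℕ, ((G j).neighborSet v).ncard ≤ d)
    -- edge-transitive
    (het : ∀ j, EdgeTransitive (G j))
    -- pointwise convergence of the vertex sets
    (hVconv : ∀ a : ℕ, ∃ j₀ : ℕ, ∀ j ≥ j₀, (a ∈ Set.Icc 1 (n j) ↔ a ∈ Vbar))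
    -- pointwise convergence of the edge sets
    (hEconv : ∀ a b : ℕ, ∃ j₀ : ℕ, ∀ j ≥ j₀, ((G j).Adj a b ↔ Gbar.Adj a b)) :
    (Gbar.induce Vbar).Connected ∧ EdgeTransitive Gbar := by
  have hG : ∀ j, IsBFSLabeled (G j) (n j) := fun j => ⟨hsupp j, hconn j, hbfs j⟩
  have hE : ∀ a b, ∀ᶠ j in atTop, ((G j).Adj a b ↔ Gbar.Adj a b) := fun a b =>
    eventually_atTop.2 (hEconv a b)
  exact ⟨connected_induce_of_pointwise_limit hG hdeg (fun a => eventually_atTop.2 (hVconv a)) hE,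
    edgeTransitive_of_pointwise_limit hG hdeg het hE⟩

/-- the pointwise limit of a sequence of finite connected BFS-labeled
edge-transitive graphs of maximum degree at most `d` is connected and edge-transitive.
Each graph `G j` lives on the universe `ℕ` with (finite) vertex set `{1, …, n j}`, and
the limit graph `Ḡ` has vertex set `V̄`. -/
theorem stmt_17 (d : ℕ) (n : ℕ → ℕ) (G : ℕ → SimpleGraph ℕ)
    (Gbar : SimpleGraph ℕ) (Vbar : Set ℕ)
    -- each G j has vertex set {1,…,n j}
    (hsupp : ∀ j, ∀ a b : ℕ, (G j).Adj a b → a ∈ Set.Icc 1 (n j) ∧ b ∈ Set.Icc 1 (n j))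
    (hne : ∀ j, 1 ≤ n j)
    -- connected
    (hconn : ∀ j, ((G j).induce (Set.Icc 1 (n j))).Connected)
    -- BFS-labeled
    (hbfs : ∀ j, ∀ i k : ℕ, i ∈ Set.Icc 1 (n j) → k ∈ Set.Icc 1 (n j) → i < k →
      (G j).dist 1 i ≤ (G j).dist 1 k)
    -- maximum degree at most d
    (hdeg : ∀ j, ∀ v : ℕ, ((G j).neighborSet v).ncard ≤ d)
    -- edge-transitive
    (het : ∀ j, EdgeTransitive (G j))
    -- the edges of Ḡ lie within V̄
    (hbar : ∀ a b : ℕ, Gbar.Adj a b → a ∈ Vbar ∧ b ∈ Vbar)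
    -- pointwise convergence of the vertex sets
    (hVconv : ∀ a : ℕ, ∃ j₀ : ℕ, ∀ j ≥ j₀, (a ∈ Set.Icc 1 (n j) ↔ a ∈ Vbar))
    -- pointwise convergence of the edge sets
    (hEconv : ∀ a b : ℕ, ∃ j₀ : ℕ, ∀ j ≥ j₀, ((G j).Adj a b ↔ Gbar.Adj a b)) :
    (Gbar.induce Vbar).Connected ∧ EdgeTransitive Gbar :=
  stmt_17_general d n G Gbar Vbar hsupp hconn hbfs hdeg het hVconv hEconv
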